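/- Pushforward of the dual diagonal Schur measure is the Krawtchouk ensemble: fix a, b ∈ ℤ_{≥1}, x, y > 0. The measure on partitions λ with λ_1 ≤ b and at most a parts, with weight proportional to s_λ(x,…,x) s_{λ'}(y,…,y) (a copies of x, b copies of y, λ' the conjugate partition), pushed forward under λ ↦ {a + λ_i − i : 1 ≤ i ≤ a} ⊂ {0,…,a+b−1}, equals the a-point Krawtchouk ensemble Krawtchouk(a, xy/(1+xy), a+b−1): the measure on a-point subsets {ℓ₁ > … > ℓ_a} of {0,…,a+b−1} proportional to ∏_{i<j}(ℓ_i−ℓ_j)² ∏_i C(a+b−1, ℓ_i) p^{ℓ_i}(1−p)^{a+b−1−ℓ_i} with p = xy/(1+xy). -/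

import Mathlib

/-!
By Weyl's formula, `s_λ(x,…,x) = x^|λ| Δ(λ_i - i) / Δ(-i)` with `Δ` the Vandermonde product, and
likewise for `λ'` with `b` variables, so the weight is `(xy)^|λ| Δ(λ_i - i) Δ(λ'_j - j)` up to a
constant. The β-numbers `ℓ_i = λ_i + a - 1 - i` and the numbers `a + j - λ'_j` partition
`{0,…,N}`, `N = a + b - 1` (Macdonald I.1.7). For a partition `A ⊔ B` of `{0,…,N}` the product
of `|u - v|` over `u ∈ A`, `v ≤ N`, `v ≠ u` is `∏_{u ∈ A} u! (N-u)!` and splits as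
`Δ(A)² · ∏_{u ∈ A, v ∈ B} |u - v|`; comparing with the same for `B` eliminates the mixed product:
`Δ(B) ∏_{u ∈ A} u! (N-u)! = (∏_{k ≤ N} k!) Δ(A)`. Hence `Δ(λ'_j - j)` is `Δ(ℓ)` divided by
`∏_i ℓ_i! (N-ℓ_i)!`, which turns `(xy)^{ℓ_i}` into the binomial weight
`C(N, ℓ_i) p^{ℓ_i} (1-p)^{N-ℓ_i}` up to `(1+xy)^N`.
-/

/-- Value of the Schur polynomial `s_λ` at `m` equal positive variables `(x,…,x)`
(Weyl's dimension formula), with `λ` given as a weakly decreasing `lam : ℕ → ℕ`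
having at most `m` nonzero parts (0-based indices). -/
noncomputable def schurVal (m : ℕ) (x : ℝ) (lam : ℕ → ℕ) : ℝ :=
  x ^ (∑ i ∈ Finset.range m, lam i) *
    ∏ i ∈ Finset.range m, ∏ j ∈ Finset.range m,
      if i < j then ((lam i : ℝ) - i - (lam j : ℝ) + j) / ((j : ℝ) - i) else 1

/-- The conjugate partition: `λ'_j = #{i : λ_i > j}` (0-based). -/
def conjPart (a : ℕ) (lam : ℕ → ℕ) : ℕ → ℕ :=
  fun j => ((Finset.range a).filter fun i => j < lam i).card

open Finset
open scoped Nat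

noncomputable def vandermondeProd (f : ℕ → ℝ) (n : ℕ) : ℝ :=
  ∏ i ∈ range n, ∏ j ∈ range n, if i < j then f i - f j else 1

theorem vandermondeProd_congr {f g : ℕ → ℝ} {n : ℕ} (h : ∀ i < n, f i = g i) :
    vandermondeProd f n = vandermondeProd g n :=
  prod_congr rfl fun i hi => prod_congr rfl fun j hj => by
    rw [h i (mem_range.1 hi), h j (mem_range.1 hj)]

theorem vandermondeProd_add_const (f : ℕ → ℝ) (c : ℝ) (n : ℕ) :
    vandermondeProd (fun i => f i + c) n = vandermondeProd f n := by
  simp only [vandermondeProd, add_sub_add_right_eq_sub]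

theorem vandermondeProd_pos {f : ℕ → ℝ} {n : ℕ} (hf : StrictAntiOn f (Set.Iio n)) :
    0 < vandermondeProd f n :=
  prod_pos fun i hi => prod_pos fun j hj => by
    split_ifs with hij
    · exact sub_pos.2 (hf (mem_range.1 hi) (mem_range.1 hj) hij)
    · exact one_pos

theorem sq_vandermondeProd (f : ℕ → ℝ) (n : ℕ) :
    vandermondeProd f n ^ 2 =
      ∏ i ∈ range n, ∏ j ∈ range n, if i < j then (f i - f j) ^ 2 else 1 := by
  simp only [vandermondeProd, ← prod_pow, ite_pow, one_pow]

theorem sq_vandermondeProd_const_sub (f : ℕ → ℝ) (c : ℝ) (n : ℕ) :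
    vandermondeProd (fun i => c - f i) n ^ 2 = vandermondeProd f n ^ 2 := by
  rw [sq_vandermondeProd, sq_vandermondeProd]
  refine prod_congr rfl fun i _ => prod_congr rfl fun j _ => ?_
  rw [sub_sub_sub_cancel_left, sub_sq_comm]

theorem strictAnti_cast_sub_id {g : ℕ → ℕ} (hg : Antitone g) :
    StrictAnti fun i => (g i : ℝ) - i := fun i j hij => by
  have : (g j : ℝ) ≤ g i := by exact_mod_cast hg hij.le
  have : (i : ℝ) < j := by exact_mod_cast hij
  linarith

theorem schurVal_eq (m : ℕ) (x : ℝ) (lam : ℕ → ℕ) :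
    schurVal m x lam = x ^ (∑ i ∈ range m, lam i) *
      (vandermondeProd (fun i => (lam i : ℝ) - i) m / vandermondeProd (fun i => -(i : ℝ)) m) := by
  rw [schurVal, vandermondeProd, vandermondeProd, ← prod_div_distrib]
  congr 1
  refine prod_congr rfl fun i _ => ?_
  rw [← prod_div_distrib]
  refine prod_congr rfl fun j _ => ?_
  split_ifs
  · ring
  · rw [div_one]

noncomputable def distProd (s t : Finset ℕ) : ℝ :=
  ∏ u ∈ s, ∏ v ∈ t, if u = v then 1 else |(u : ℝ) - v|

theorem distProd_comm (s t : Finset ℕ) : distProd s t = distProd t s := by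
  rw [distProd, prod_comm]
  refine prod_congr rfl fun v _ => prod_congr rfl fun u _ => ?_
  rcases eq_or_ne u v with rfl | h
  · rfl
  · rw [if_neg h, if_neg h.symm, abs_sub_comm]

theorem distProd_union_left {s s' : Finset ℕ} (t : Finset ℕ) (h : Disjoint s s') :
    distProd (s ∪ s') t = distProd s t * distProd s' t :=
  prod_union h

theorem distProd_union_right (s : Finset ℕ) {t t' : Finset ℕ} (h : Disjoint t t') :
    distProd s (t ∪ t') = distProd s t * distProd s t' := by
  rw [distProd_comm, distProd_union_left _ h, distProd_comm t, distProd_comm t']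

theorem prod_range_dist_eq_factorial_mul_factorial {u n : ℕ} (hu : u < n) :
    ∏ v ∈ range n, (if u = v then 1 else |(u : ℝ) - v|) = u ! * (n - 1 - u)! := by
  rw [← prod_range_mul_prod_Ico _ hu, prod_range_succ, if_pos rfl, mul_one]
  congr 1
  · rw [← Nat.descFactorial_self, Nat.descFactorial_eq_prod_range, Nat.cast_prod]
    refine prod_congr rfl fun v hv => ?_
    have hvu := mem_range.1 hv
    rw [if_neg hvu.ne', Nat.cast_sub hvu.le, abs_of_pos (sub_pos.2 (by exact_mod_cast hvu))]
  · rw [prod_Ico_eq_prod_range, show n - (u + 1) = n - 1 - u by omega,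
      ← prod_range_add_one_eq_factorial, Nat.cast_prod]
    refine prod_congr rfl fun k _ => ?_
    rw [if_neg (by omega), abs_of_neg (by push_cast; linarith)]
    push_cast
    ring

theorem distProd_range {s : Finset ℕ} {n : ℕ} (hs : s ⊆ range n) :
    distProd s (range n) = ∏ u ∈ s, ((u ! : ℝ) * (n - 1 - u)!) :=
  prod_congr rfl fun _ hu => prod_range_dist_eq_factorial_mul_factorial (mem_range.1 (hs hu))

theorem distProd_range_self (n : ℕ) :
    distProd (range n) (range n) = (∏ k ∈ range n, (k ! : ℝ)) ^ 2 := by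
  rw [distProd_range subset_rfl, prod_mul_distrib, sq,
    prod_range_reflect (fun k => (k ! : ℝ)) n]

theorem distProd_image_self {f : ℕ → ℕ} {n : ℕ} (hf : Set.InjOn f (range n)) :
    distProd ((range n).image f) ((range n).image f) =
      vandermondeProd (fun i => (f i : ℝ)) n ^ 2 := by
  set e : ℕ → ℕ → ℝ := fun i j => if i < j then |(f i : ℝ) - f j| else 1
  have he : ∏ i ∈ range n, ∏ j ∈ range n, e i j = |vandermondeProd (fun i => (f i : ℝ)) n| := by
    simp only [e, vandermondeProd, abs_prod, apply_ite abs, abs_one]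
  have hsplit : ∀ i ∈ range n, ∀ j ∈ range n,
      (if f i = f j then 1 else |(f i : ℝ) - f j|) = e i j * e j i := by
    intro i hi j hj
    rcases lt_trichotomy i j with hij | rfl | hij
    · rw [if_neg fun h => hij.ne (hf hi hj h)]
      simp [e, hij, hij.not_gt]
    · simp [e]
    · rw [if_neg fun h => hij.ne' (hf hi hj h)]
      simp [e, hij, hij.not_gt, abs_sub_comm]
  rw [distProd, prod_image hf]
  simp_rw [prod_image hf]
  rw [prod_congr rfl fun i hi => prod_congr rfl fun j hj => hsplit i hi j hj]
  simp_rw [prod_mul_distrib]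
  rw [prod_comm (f := fun i j => e j i), he, ← sq_abs, sq]

theorem distProd_mul_sq_of_disjoint {A B : Finset ℕ} (h : Disjoint A B) :
    distProd B B * distProd A (A ∪ B) ^ 2 = distProd (A ∪ B) (A ∪ B) * distProd A A := by
  simp only [distProd_union_left _ h, distProd_union_right _ h, distProd_comm B A]
  ring

theorem prod_choose_mul_pow_mul_pow {ι : Type*} (s : Finset ι) (k : ι → ℕ) {N : ℕ}
    (hk : ∀ i ∈ s, k i ≤ N) {t : ℝ} (ht : 1 + t ≠ 0) :
    ∏ i ∈ s, (N.choose (k i) : ℝ) * (t / (1 + t)) ^ k i * (1 - t / (1 + t)) ^ (N - k i) =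
      (N ! : ℝ) ^ s.card * t ^ (∑ i ∈ s, k i) /
        ((∏ i ∈ s, ((k i)! * (N - k i)! : ℝ)) * (1 + t) ^ (s.card * N)) := by
  have hterm : ∀ i ∈ s,
      (N.choose (k i) : ℝ) * (t / (1 + t)) ^ k i * (1 - t / (1 + t)) ^ (N - k i) =
        N ! * t ^ k i / ((k i)! * (N - k i)! * (1 + t) ^ N) := by
    intro i hi
    have hpow : (1 + t) ^ N = (1 + t) ^ k i * (1 + t) ^ (N - k i) := by
      rw [← pow_add, Nat.add_sub_cancel' (hk i hi)]
    rw [Nat.cast_choose ℝ (hk i hi), one_sub_div ht, add_sub_cancel_right, div_pow, div_pow,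
      one_pow, hpow]
    field_simp
  rw [prod_congr rfl hterm, prod_div_distrib, prod_mul_distrib, prod_mul_distrib, prod_const,
    prod_const, prod_pow_eq_pow_sum, pow_mul']

section Partition

variable {a b : ℕ} {lam : ℕ → ℕ}

theorem conjPart_le (a : ℕ) (lam : ℕ → ℕ) (j : ℕ) : conjPart a lam j ≤ a :=
  (card_filter_le _ _).trans (card_range a).le

theorem conjPart_antitone (a : ℕ) (lam : ℕ → ℕ) : Antitone (conjPart a lam) :=
  fun _ _ hjk => card_le_card fun _ => by
    simp only [mem_filter]
    exact fun h => ⟨h.1, hjk.trans_lt h.2⟩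

theorem lt_conjPart_iff (hlam : Antitone lam) {i : ℕ} (hi : i < a) (j : ℕ) :
    i < conjPart a lam j ↔ j < lam i := by
  constructor
  · intro h
    by_contra! hij
    have : ((range a).filter fun i' => j < lam i') ⊆ range i := fun i' hi' => by
      simp only [mem_filter, mem_range] at hi' ⊢
      by_contra! h'
      exact absurd ((hlam h').trans hij) (not_le.2 hi'.2)
    exact absurd ((card_le_card this).trans (card_range i).le) (not_le.2 h)
  · intro h
    have : range (i + 1) ⊆ (range a).filter fun i' => j < lam i' := fun i' hi' => by
      simp only [mem_filter, mem_range] at hi' ⊢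
      exact ⟨by omega, h.trans_le (hlam (by omega))⟩
    exact (card_range (i + 1)).ge.trans (card_le_card this)

theorem sum_conjPart (hle : ∀ i, lam i ≤ b) :
    ∑ j ∈ range b, conjPart a lam j = ∑ i ∈ range a, lam i := by
  simp only [conjPart, card_filter]
  rw [sum_comm]
  refine sum_congr rfl fun i _ => ?_
  rw [← card_filter, show (range b).filter (· < lam i) = range (lam i) by
    ext k; simp only [mem_filter, mem_range]; have := hle i; omega, card_range]

def betaNumber (a : ℕ) (lam : ℕ → ℕ) (i : ℕ) : ℕ := a - 1 - i + lam i

def betaComplement (a : ℕ) (lam : ℕ → ℕ) (j : ℕ) : ℕ := a + j - conjPart a lam j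

theorem betaNumber_strictAntiOn (hlam : Antitone lam) :
    StrictAntiOn (betaNumber a lam) (Set.Iio a) := fun i hi j hj hij => by
  have := hlam hij.le
  simp only [Set.mem_Iio] at hi hj
  unfold betaNumber
  omega

theorem betaNumber_injOn (hlam : Antitone lam) : Set.InjOn (betaNumber a lam) (range a) := by
  rw [coe_range]
  exact (betaNumber_strictAntiOn hlam).injOn

theorem betaNumber_lt (hle : ∀ i, lam i ≤ b) {i : ℕ} (hi : i < a) : betaNumber a lam i < a + b := by
  have := hle i
  unfold betaNumber
  omega

theorem betaComplement_strictMono (a : ℕ) (lam : ℕ → ℕ) :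
    StrictMono (betaComplement a lam) := fun j k hjk => by
  have := conjPart_antitone a lam hjk.le
  have := conjPart_le a lam j
  unfold betaComplement
  omega

theorem betaNumber_ne_betaComplement (hlam : Antitone lam) {i : ℕ} (hi : i < a) (j : ℕ) :
    betaNumber a lam i ≠ betaComplement a lam j := by
  have := lt_conjPart_iff hlam hi j
  have := conjPart_le a lam j
  unfold betaNumber betaComplement
  omega

theorem disjoint_betaNumber_betaComplement (hlam : Antitone lam) :
    Disjoint ((range a).image (betaNumber a lam)) ((range b).image (betaComplement a lam)) := by
  simp only [disjoint_left, mem_image, mem_range]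
  rintro _ ⟨i, hi, rfl⟩ ⟨j, -, hj⟩
  exact betaNumber_ne_betaComplement hlam hi j hj.symm

theorem betaNumber_union_betaComplement (hlam : Antitone lam) (hle : ∀ i, lam i ≤ b) :
    (range a).image (betaNumber a lam) ∪ (range b).image (betaComplement a lam) =
      range (a + b) := by
  refine eq_of_subset_of_card_le (union_subset ?_ ?_) ?_
  · exact image_subset_iff.2 fun i hi => mem_range.2 (betaNumber_lt hle (mem_range.1 hi))
  · exact image_subset_iff.2 fun j hj => mem_range.2 (by
      have := mem_range.1 hj
      unfold betaComplement
      omega)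
  · rw [card_union_of_disjoint (disjoint_betaNumber_betaComplement hlam),
      card_image_of_injOn (betaNumber_injOn hlam),
      card_image_of_injective _ (betaComplement_strictMono a lam).injective, card_range, card_range,
      card_range]

theorem vandermondeProd_betaNumber (a : ℕ) (lam : ℕ → ℕ) :
    vandermondeProd (fun i => (betaNumber a lam i : ℝ)) a =
      vandermondeProd (fun i => (lam i : ℝ) - i) a := by
  refine (vandermondeProd_congr fun i hi => ?_).trans
    (vandermondeProd_add_const (fun i => (lam i : ℝ) - i) ((a : ℝ) - 1) a)
  rw [betaNumber, Nat.cast_add, Nat.cast_sub (by omega), Nat.cast_sub (by omega)]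
  push_cast
  ring

theorem sq_vandermondeProd_betaComplement (a b : ℕ) (lam : ℕ → ℕ) :
    vandermondeProd (fun j => (betaComplement a lam j : ℝ)) b ^ 2 =
      vandermondeProd (fun j => (conjPart a lam j : ℝ) - j) b ^ 2 := by
  rw [← sq_vandermondeProd_const_sub _ (a : ℝ)]
  congr 1
  refine vandermondeProd_congr fun j _ => ?_
  rw [betaComplement, Nat.cast_sub (by have := conjPart_le a lam j; omega)]
  push_cast
  ring

theorem vandermondeProd_conjPart_mul (hlam : Antitone lam) (hle : ∀ i, lam i ≤ b) :
    vandermondeProd (fun j => (conjPart a lam j : ℝ) - j) b *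
        ∏ i ∈ range a, ((betaNumber a lam i)! * (a + b - 1 - betaNumber a lam i)! : ℝ) =
      (∏ k ∈ range (a + b), (k ! : ℝ)) * vandermondeProd (fun i => (lam i : ℝ) - i) a := by
  have hinj := betaNumber_injOn (a := a) hlam
  have key :=
    distProd_mul_sq_of_disjoint (disjoint_betaNumber_betaComplement (a := a) (b := b) hlam)
  rw [betaNumber_union_betaComplement hlam hle, distProd_range_self,
    distProd_range (by rw [← betaNumber_union_betaComplement hlam hle]; exact subset_union_left),
    prod_image hinj, distProd_image_self hinj,
    distProd_image_self (betaComplement_strictMono a lam).injective.injOn,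
    sq_vandermondeProd_betaComplement, vandermondeProd_betaNumber] at key
  have hconj_pos := vandermondeProd_pos
    ((strictAnti_cast_sub_id (conjPart_antitone a lam)).strictAntiOn (Set.Iio b))
  have hlam_pos := vandermondeProd_pos ((strictAnti_cast_sub_id hlam).strictAntiOn (Set.Iio a))
  refine (sq_eq_sq₀ (by positivity) (by positivity)).1 ?_
  linear_combination key

end Partition

theorem dual_schur_measure_is_krawtchouk_ensemble_general (a b : ℕ)
    (x y : ℝ) (hx : 0 < x) (hy : 0 < y) :
    ∃ c : ℝ, 0 < c ∧
      ∀ lam : ℕ → ℕ, (∀ i j : ℕ, i ≤ j → lam j ≤ lam i) →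
        (∀ i : ℕ, a ≤ i → lam i = 0) → (∀ i : ℕ, lam i ≤ b) →
        let p : ℝ := x * y / (1 + x * y)
        let ℓ : ℕ → ℕ := fun i => a - 1 - i + lam i
        schurVal a x lam * schurVal b y (conjPart a lam) =
          c * (∏ i ∈ Finset.range a, ∏ j ∈ Finset.range a,
                if i < j then ((ℓ i : ℝ) - (ℓ j : ℝ)) ^ 2 else 1) *
            ∏ i ∈ Finset.range a,
              (Nat.choose (a + b - 1) (ℓ i) : ℝ) * p ^ (ℓ i) *
                (1 - p) ^ (a + b - 1 - ℓ i) := by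
  have hxy : 0 < x * y := mul_pos hx hy
  have hV₀ : ∀ n, 0 < vandermondeProd (fun i => -(i : ℝ)) n := fun n =>
    vandermondeProd_pos fun i _ j _ hij => neg_lt_neg (Nat.cast_lt.2 hij)
  have hVa := hV₀ a
  have hVb := hV₀ b
  refine ⟨(∏ k ∈ range (a + b), (k ! : ℝ)) * (1 + x * y) ^ (a * (a + b - 1)) /
      ((x * y) ^ (∑ i ∈ range a, (a - 1 - i)) * ((a + b - 1)! : ℝ) ^ a *
        vandermondeProd (fun i => -(i : ℝ)) a * vandermondeProd (fun i => -(i : ℝ)) b),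
      by positivity, ?_⟩
  intro lam hlam _ hle p ℓ
  have hℓ : ℓ = betaNumber a lam := rfl
  have hp : p = x * y / (1 + x * y) := rfl
  have hℓle : ∀ i ∈ range a, betaNumber a lam i ≤ a + b - 1 := fun i hi =>
    Nat.le_sub_one_of_lt (betaNumber_lt hle (mem_range.1 hi))
  have hF : 0 < ∏ i ∈ range a,
      ((betaNumber a lam i)! * (a + b - 1 - betaNumber a lam i)! : ℝ) := by
    positivity
  have hconj := vandermondeProd_conjPart_mul (a := a) hlam hle
  rw [← eq_div_iff_mul_eq hF.ne'] at hconj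
  rw [hp, hℓ, prod_choose_mul_pow_mul_pow _ _ hℓle (by positivity), ← sq_vandermondeProd,
    vandermondeProd_betaNumber, schurVal_eq, schurVal_eq, sum_conjPart hle, hconj, card_range,
    show ∑ i ∈ range a, betaNumber a lam i = ∑ i ∈ range a, (a - 1 - i) + ∑ i ∈ range a, lam i
      from sum_add_distrib, pow_add, mul_pow]
  field_simp
  ring

/-- Pushforward of the dual diagonal Schur measure is the Krawtchouk ensemble: for
`a, b ≥ 1` and `x, y > 0`, the weight `s_λ(x,…,x) s_{λ'}(y,…,y)` of a partition `λ`
with at most `a` parts, all of size `≤ b`, equals — up to a constant `c > 0`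
independent of `λ` — the Krawtchouk ensemble weight
`∏_{i<j}(ℓ_i−ℓ_j)² ∏_i C(a+b−1, ℓ_i) p^{ℓ_i}(1−p)^{a+b−1−ℓ_i}` with `p = xy/(1+xy)`,
of the configuration `ℓ_i = a + λ_i − i` (0-based: `ℓ i = a − 1 − i + λ i`). -/
theorem dual_schur_measure_is_krawtchouk_ensemble (a b : ℕ) (ha : 1 ≤ a) (hb : 1 ≤ b)
    (x y : ℝ) (hx : 0 < x) (hy : 0 < y) :
    ∃ c : ℝ, 0 < c ∧
      ∀ lam : ℕ → ℕ, (∀ i j : ℕ, i ≤ j → lam j ≤ lam i) →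
        (∀ i : ℕ, a ≤ i → lam i = 0) → (∀ i : ℕ, lam i ≤ b) →
        let p : ℝ := x * y / (1 + x * y)
        let ℓ : ℕ → ℕ := fun i => a - 1 - i + lam i
        schurVal a x lam * schurVal b y (conjPart a lam) =
          c * (∏ i ∈ Finset.range a, ∏ j ∈ Finset.range a,
                if i < j then ((ℓ i : ℝ) - (ℓ j : ℝ)) ^ 2 else 1) *
            ∏ i ∈ Finset.range a,
              (Nat.choose (a + b - 1) (ℓ i) : ℝ) * p ^ (ℓ i) *
                (1 - p) ^ (a + b - 1 - ℓ i) :=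
  dual_schur_measure_is_krawtchouk_ensemble_general a b x y hx hy
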